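/- arXiv:1609.01766 — 2 statements merged into one kernel-verified Lean document; each statement's English description precedes it below -/
import Mathlib

section
/- For each a ∈ I with a > 0: β(u_a) = u_a and β(u_{−a}) = u_{−a} + (v^{L_0} − v^{−L_0})·u_a. Consequently, the ı-canonical basis of V_L is: b_{u_a} = u_a for a > 0, together with b_{u_{−a}} = u_{−a} if L_0 = 0, b_{u_{−a}} = u_{−a} + v^{L_0}·u_a if L_0 > 0, and b_{u_{−a}} = u_{−a} − v^{−L_0}·u_a if L_0 < 0; i.e. in each case b_{u_{−a}} is the unique β-invariant element of the form u_{−a} + (an element of v·ℤ[v]·u_a). -/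
attribute [local instance] Classical.propDecidable

noncomputable section

/-- The field `ℚ(v)`. -/
abbrev Kv : Type := RatFunc ℚ

/-- The indeterminate `v`. -/
noncomputable def vv : Kv := RatFunc.X

/-- The index set `I = {-r-1/2, -r+1/2, ..., r+1/2}` of half-integers, as a subtype of `ℚ`. -/
def HIdx (r : ℕ) : Type := {a : ℚ // ∃ k : ℤ, -(r : ℤ) - 1 ≤ k ∧ k ≤ r ∧ a = (k : ℚ) + 1/2}

instance (r : ℕ) : DecidableEq (HIdx r) := fun a b =>
  decidable_of_iff (a.1 = b.1) Subtype.ext_iff.symm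

/-- Negation on the index set. -/
def HIdx.neg {r : ℕ} (a : HIdx r) : HIdx r :=
  ⟨-a.1, by
    obtain ⟨k, h1, h2, h3⟩ := a.2
    exact ⟨-k - 1, by omega, by omega, by rw [h3]; push_cast; ring⟩⟩

/-- The space `V_L`, the free `ℚ(v)`-module on `I`. -/
abbrev VL (r : ℕ) : Type := HIdx r →₀ Kv

/-- The basis vector `u_a`. -/
noncomputable def uv {r : ℕ} (a : HIdx r) : VL r := Finsupp.single a 1

/-- The Hecke operator `H_0` on `V_L`: `u_a H_0 = u_{-a}` if `a > 0`, and
`u_a H_0 = u_{-a} + (v^{-L_0} - v^{L_0}) u_a` if `a < 0`. -/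
noncomputable def H0L (r : ℕ) (L0 : ℤ) : Module.End Kv (VL r) :=
  Finsupp.lift (VL r) Kv (HIdx r) (fun a =>
    if 0 < a.1 then uv a.neg else uv a.neg + (vv ^ (-L0) - vv ^ L0) • uv a)

/-- The conditions characterizing the bar involution `β` on `V_L`. -/
def betaCondV (r : ℕ) (L0 : ℤ) (bar : Kv →+* Kv) (β : VL r →+ VL r) : Prop :=
  (∀ (c : Kv) (x : VL r), β (c • x) = bar c • β x) ∧
  (∀ a : HIdx r, 0 < a.1 → β (uv a) = uv a) ∧
  (∀ x : VL r, β (H0L r L0 x) = (H0L r L0 + (vv ^ L0 - vv ^ (-L0)) • 1) (β x))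

/-- Membership in `v · ℤ[v] ⊆ ℚ(v)`. -/
def inVZv (c : Kv) : Prop :=
  ∃ P : Polynomial ℤ, c = algebraMap (Polynomial ℚ) Kv (Polynomial.X * P.map (Int.castRingHom ℚ))

/-- The ı-canonical basis vector attached to `u_{-a}` (`a > 0`). -/
noncomputable def canB (r : ℕ) (L0 : ℤ) (a : HIdx r) : VL r :=
  if 0 < L0 then uv a.neg + (vv ^ L0) • uv a
  else if L0 < 0 then uv a.neg - (vv ^ (-L0)) • uv a
  else uv a.neg

/-! For `a > 0`, `β` fixes `u_a`, and commuting `β` with `H_0` (which sends `u_a` to `u_{-a}`)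
gives `β(u_{-a})`. Hence `u_{-a} + c u_a` is `β`-invariant iff `c - c̄ = v^{L_0} - v^{-L_0}`, which
the coefficient of `canB` solves. Two solutions in `v ℤ[v]` differ by a bar-invariant element of
`v ℚ[v]`, and the only such element is `0`. -/

open Polynomial

lemma ringHom_apply_eq_eval₂ {K : Type*} [Field K] [CharZero K] (f : ℚ[X] →+* K) (p : ℚ[X]) :
    f p = p.eval₂ (algebraMap ℚ K) (f X) := by
  have h : f = eval₂RingHom (algebraMap ℚ K) (f X) :=
    ringHom_ext
      (fun q => RingHom.congr_fun (RingHom.ext_rat (f.comp C) ((eval₂RingHom _ _).comp C)) q)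
      (by simp)
  exact RingHom.congr_fun h p

lemma algebraMap_eq_eval₂_vv (p : ℚ[X]) : algebraMap ℚ[X] Kv p = p.eval₂ (algebraMap ℚ Kv) vv := by
  rw [ringHom_apply_eq_eval₂ (algebraMap ℚ[X] Kv), RatFunc.algebraMap_X]
  rfl

lemma bar_algebraMap {bar : Kv →+* Kv} (hbar : bar vv = vv⁻¹) (p : ℚ[X]) :
    bar (algebraMap ℚ[X] Kv p) = p.eval₂ (algebraMap ℚ Kv) vv⁻¹ := by
  rw [← RingHom.comp_apply, ringHom_apply_eq_eval₂, RingHom.comp_apply, RatFunc.algebraMap_X]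
  exact congrArg (fun x => p.eval₂ (algebraMap ℚ Kv) x) hbar

lemma eval₂_vv_injective : Function.Injective (fun p : ℚ[X] => p.eval₂ (algebraMap ℚ Kv) vv) := by
  intro p q h
  simp only [← algebraMap_eq_eval₂_vv] at h
  exact RatFunc.algebraMap_injective ℚ h

/-- `v^n p(v⁻¹)` is a polynomial of degree at most `n = deg p`, while `v^n p(v)` has degree
`2n > n`. -/
lemma eq_zero_of_eval₂_inv_eq {p : ℚ[X]} (hXp : X ∣ p)
    (h : p.eval₂ (algebraMap ℚ Kv) vv⁻¹ = p.eval₂ (algebraMap ℚ Kv) vv) :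
    p = 0 := by
  by_contra hp
  set n := p.natDegree
  have hv : vv ≠ 0 := RatFunc.X_ne_zero
  let _ : Invertible vv⁻¹ := invertibleOfNonzero (inv_ne_zero hv)
  have hrefl :
      (reflect n p).eval₂ (algebraMap ℚ Kv) vv = (p * X ^ n).eval₂ (algebraMap ℚ Kv) vv := by
    have key := eval₂_reflect_mul_pow (algebraMap ℚ Kv) vv⁻¹ n p le_rfl
    rw [invOf_eq_inv, inv_inv, h] at key
    rw [eval₂_mul, eval₂_X_pow, ← key, mul_assoc, ← mul_pow, inv_mul_cancel₀ hv, one_pow,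
      mul_one]
  have hn : 1 ≤ n := by
    obtain ⟨q, rfl⟩ := hXp
    have hq : q ≠ 0 := right_ne_zero_of_mul hp
    simp [n, natDegree_mul X_ne_zero hq]
  have hdeg := (eval₂_vv_injective hrefl) ▸ (natDegree_reflect_le (N := n) (p := p))
  rw [natDegree_mul hp (pow_ne_zero n X_ne_zero), natDegree_X_pow, max_self] at hdeg
  omega

lemma inVZv.sub {c c' : Kv} (hc : inVZv c) (hc' : inVZv c') : inVZv (c - c') := by
  obtain ⟨P, rfl⟩ := hc
  obtain ⟨P', rfl⟩ := hc'
  exact ⟨P - P', by rw [Polynomial.map_sub, mul_sub, map_sub]⟩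

lemma inVZv_zero : inVZv 0 := ⟨0, by simp⟩

lemma inVZv.neg {c : Kv} (hc : inVZv c) : inVZv (-c) := by
  simpa using inVZv_zero.sub hc

lemma inVZv_zpow {n : ℤ} (hn : 0 < n) : inVZv (vv ^ n) := by
  lift n to ℕ using hn.le
  refine ⟨X ^ (n - 1), ?_⟩
  rw [Polynomial.map_pow, Polynomial.map_X, ← pow_succ', Nat.sub_add_cancel (by omega), map_pow,
    RatFunc.algebraMap_X, zpow_natCast]
  rfl

lemma eq_zero_of_inVZv_of_bar_eq {bar : Kv →+* Kv} (hbar : bar vv = vv⁻¹) {c : Kv}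
    (hc : inVZv c) (h : bar c = c) : c = 0 := by
  obtain ⟨P, rfl⟩ := hc
  rw [bar_algebraMap hbar, algebraMap_eq_eval₂_vv] at h
  rw [eq_zero_of_eval₂_inv_eq (dvd_mul_right _ _) h, map_zero]

lemma eq_of_inVZv_of_sub_bar_eq {bar : Kv →+* Kv} (hbar : bar vv = vv⁻¹) {c c' : Kv}
    (hc : inVZv c) (hc' : inVZv c') (h : c - bar c = c' - bar c') : c = c' := by
  refine sub_eq_zero.mp (eq_zero_of_inVZv_of_bar_eq hbar (hc.sub hc') ?_)
  rw [map_sub]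
  linear_combination -h

lemma bar_zpow {bar : Kv →+* Kv} (hbar : bar vv = vv⁻¹) (m : ℤ) : bar (vv ^ m) = vv ^ (-m) := by
  rw [map_zpow₀, hbar, inv_zpow, zpow_neg]

def canCoeff (L0 : ℤ) : Kv :=
  if 0 < L0 then vv ^ L0 else if L0 < 0 then -vv ^ (-L0) else 0

lemma canB_eq_add_smul (r : ℕ) (L0 : ℤ) (a : HIdx r) :
    canB r L0 a = uv a.neg + canCoeff L0 • uv a := by
  unfold canB canCoeff
  split_ifs <;> simp [sub_eq_add_neg]

lemma inVZv_canCoeff (L0 : ℤ) : inVZv (canCoeff L0) := by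
  unfold canCoeff
  split_ifs with hpos hneg
  · exact inVZv_zpow hpos
  · exact (inVZv_zpow (neg_pos.mpr hneg)).neg
  · exact inVZv_zero

lemma canCoeff_sub_bar {bar : Kv →+* Kv} (hbar : bar vv = vv⁻¹) (L0 : ℤ) :
    canCoeff L0 - bar (canCoeff L0) = vv ^ L0 - vv ^ (-L0) := by
  unfold canCoeff
  split_ifs with hpos hneg
  · rw [bar_zpow hbar]
  · rw [map_neg, bar_zpow hbar, neg_neg]; ring
  · simp [show L0 = 0 by omega]

lemma H0L_uv_of_pos {r : ℕ} (L0 : ℤ) {a : HIdx r} (ha : 0 < a.1) :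
    H0L r L0 (uv a) = uv a.neg := by
  simp [H0L, uv, ha]

namespace betaCondV

variable {r : ℕ} {L0 : ℤ} {bar : Kv →+* Kv} {β : VL r →+ VL r}
  (hβ : betaCondV r L0 bar β) {a : HIdx r} (ha : 0 < a.1)
include hβ ha

lemma apply_uv_neg : β (uv a.neg) = uv a.neg + (vv ^ L0 - vv ^ (-L0)) • uv a := by
  have h := hβ.2.2 (uv a)
  rwa [H0L_uv_of_pos L0 ha, hβ.2.1 a ha, LinearMap.add_apply, LinearMap.smul_apply,
    Module.End.one_apply, H0L_uv_of_pos L0 ha] at h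

lemma apply_add_smul (c : Kv) :
    β (uv a.neg + c • uv a) = uv a.neg + (vv ^ L0 - vv ^ (-L0) + bar c) • uv a := by
  rw [map_add, hβ.1, hβ.apply_uv_neg ha, hβ.2.1 a ha, add_assoc, ← add_smul]

lemma add_smul_fixed_iff (c : Kv) :
    β (uv a.neg + c • uv a) = uv a.neg + c • uv a ↔ c - bar c = vv ^ L0 - vv ^ (-L0) := by
  have hu : uv a ≠ 0 := Finsupp.single_ne_zero.mpr one_ne_zero
  rw [hβ.apply_add_smul ha, add_right_inj, (smul_left_injective Kv hu).eq_iff]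
  constructor <;> intro h <;> linear_combination -h

end betaCondV

/-- for `a > 0`, `β(u_a) = u_a` and
`β(u_{-a}) = u_{-a} + (v^{L_0} - v^{-L_0}) u_a`; the ı-canonical basis of `V_L` consists of the
`u_a` (`a > 0`) together with the elements `canB`, each of which is the unique `β`-invariant
element of the form `u_{-a} + (v ℤ[v])·u_a`. -/
theorem iCanonical_basis_V_even (r : ℕ) (L0 : ℤ)
    (bar : Kv →+* Kv) (hbar : bar vv = vv⁻¹)
    (β : VL r →+ VL r) (hβ : betaCondV r L0 bar β) :
    ∀ a : HIdx r, 0 < a.1 →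
      β (uv a) = uv a ∧
      β (uv a.neg) = uv a.neg + (vv ^ L0 - vv ^ (-L0)) • uv a ∧
      β (canB r L0 a) = canB r L0 a ∧
      (∃ c : Kv, inVZv c ∧ canB r L0 a = uv a.neg + c • uv a) ∧
      (∀ y : VL r, β y = y → (∃ c : Kv, inVZv c ∧ y = uv a.neg + c • uv a) →
        y = canB r L0 a) := by
  intro a ha
  rw [canB_eq_add_smul, hβ.add_smul_fixed_iff ha]
  refine ⟨hβ.2.1 a ha, hβ.apply_uv_neg ha, canCoeff_sub_bar hbar L0,
    ⟨canCoeff L0, inVZv_canCoeff L0, rfl⟩, ?_⟩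
  rintro _ hy ⟨c, hc, rfl⟩
  rw [hβ.add_smul_fixed_iff ha] at hy
  rw [eq_of_inVZv_of_sub_bar_eq hbar hc (inVZv_canCoeff L0)
    (hy.trans (canCoeff_sub_bar hbar L0).symm)]
end
end

section
/- There exists a unique ℚ-algebra homomorphism ψ_ȷ : U^ȷ → U^ȷ satisfying ψ_ȷ(a·x) = bar(a)·ψ_ȷ(x) for all a ∈ K and x ∈ U^ȷ, together with ψ_ȷ(k_i) = k_i^{−1}, ψ_ȷ(e_i) = e_i, and ψ_ȷ(f_i) = f_i for all i ∈ I^ȷ. Moreover ψ_ȷ is an involution: ψ_ȷ ∘ ψ_ȷ = id. -/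
attribute [local instance] Classical.propDecidable

noncomputable section

/-- The field `ℚ(p,q)`. -/
abbrev K2 : Type := FractionRing (MvPolynomial (Fin 2) ℚ)

noncomputable def pp : K2 := algebraMap (MvPolynomial (Fin 2) ℚ) K2 (MvPolynomial.X 0)
noncomputable def qq : K2 := algebraMap (MvPolynomial (Fin 2) ℚ) K2 (MvPolynomial.X 1)

/-- Generators of `U^ȷ`: `e_i, f_i, k_i, k_i⁻¹` for `i ∈ I^ȷ = {1/2, 3/2, …, r-1/2}` (the term
`i : Fin r` encodes the index `i.val + 1/2`). -/
inductive UjGen (r : ℕ) : Type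
  | e : Fin r → UjGen r
  | f : Fin r → UjGen r
  | k : Fin r → UjGen r
  | kinv : Fin r → UjGen r

/-- The free algebra on the generators. -/
abbrev FUj (r : ℕ) : Type := FreeAlgebra K2 (UjGen r)

noncomputable def ge {r : ℕ} (i : Fin r) : FUj r := FreeAlgebra.ι K2 (UjGen.e i)
noncomputable def gf {r : ℕ} (i : Fin r) : FUj r := FreeAlgebra.ι K2 (UjGen.f i)
noncomputable def gk {r : ℕ} (i : Fin r) : FUj r := FreeAlgebra.ι K2 (UjGen.k i)
noncomputable def gkinv {r : ℕ} (i : Fin r) : FUj r := FreeAlgebra.ι K2 (UjGen.kinv i)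

/-- `c_{ij} = 2 δ_{ij} - δ_{|i-j|,1} + δ_{i,1/2} δ_{j,1/2}` (indices `i.val + 1/2`). -/
def cij {r : ℕ} (i j : Fin r) : ℤ :=
  2 * (if i = j then 1 else 0) - (if i.val + 1 = j.val ∨ j.val + 1 = i.val then 1 else 0)
    + (if i.val = 0 ∧ j.val = 0 then 1 else 0)

/-- The defining relations of `U^ȷ`. -/
inductive UjRel (r : ℕ) : FUj r → FUj r → Prop
  | kkinv (i : Fin r) : UjRel r (gk i * gkinv i) 1
  | kinvk (i : Fin r) : UjRel r (gkinv i * gk i) 1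
  | kk (i j : Fin r) : UjRel r (gk i * gk j) (gk j * gk i)
  | ke (i j : Fin r) : UjRel r (gk i * ge j) ((qq ^ cij i j) • (ge j * gk i))
  | kf (i j : Fin r) : UjRel r (gk i * gf j) ((qq ^ (-cij i j)) • (gf j * gk i))
  | ef (i j : Fin r) (h : ¬(i.val = 0 ∧ j.val = 0)) :
      UjRel r (ge i * gf j - gf j * ge i)
        (if i = j then ((qq - qq⁻¹)⁻¹) • (gk i - gkinv i) else 0)
  | ee (i j : Fin r) (h : i.val + 1 < j.val ∨ j.val + 1 < i.val) :
      UjRel r (ge i * ge j) (ge j * ge i)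
  | ff (i j : Fin r) (h : i.val + 1 < j.val ∨ j.val + 1 < i.val) :
      UjRel r (gf i * gf j) (gf j * gf i)
  | serre_e (i j : Fin r) (h : i.val + 1 = j.val ∨ j.val + 1 = i.val) :
      UjRel r (ge i * ge i * ge j + ge j * (ge i * ge i)) ((qq + qq⁻¹) • (ge i * ge j * ge i))
  | serre_f (i j : Fin r) (h : i.val + 1 = j.val ∨ j.val + 1 = i.val) :
      UjRel r (gf i * gf i * gf j + gf j * (gf i * gf i)) ((qq + qq⁻¹) • (gf i * gf j * gf i))
  | eef (i : Fin r) (h : i.val = 0) :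
      UjRel r (ge i * ge i * gf i + gf i * (ge i * ge i))
        ((qq + qq⁻¹) • (ge i * gf i * ge i
          - ge i * ((pp * qq) • gk i + (pp⁻¹ * qq⁻¹) • gkinv i)))
  | ffe (i : Fin r) (h : i.val = 0) :
      UjRel r (gf i * gf i * ge i + ge i * (gf i * gf i))
        ((qq + qq⁻¹) • (gf i * ge i * gf i
          - ((pp * qq) • gk i + (pp⁻¹ * qq⁻¹) • gkinv i) * gf i))

/-- The coideal algebra `U^ȷ`, presented by generators and relations. -/
abbrev Uj (r : ℕ) : Type := RingQuot (UjRel r)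

noncomputable def ue {r : ℕ} (i : Fin r) : Uj r := RingQuot.mkAlgHom K2 (UjRel r) (ge i)
noncomputable def uf {r : ℕ} (i : Fin r) : Uj r := RingQuot.mkAlgHom K2 (UjRel r) (gf i)
noncomputable def uk {r : ℕ} (i : Fin r) : Uj r := RingQuot.mkAlgHom K2 (UjRel r) (gk i)
noncomputable def ukinv {r : ℕ} (i : Fin r) : Uj r := RingQuot.mkAlgHom K2 (UjRel r) (gkinv i)

/-- The conditions characterizing the bar involution `ψ_ȷ` of `U^ȷ`. -/
def psijCond (r : ℕ) (bar : K2 →+* K2) (ψ : Uj r →+* Uj r) : Prop :=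
  (∀ (a : K2) (x : Uj r), ψ (a • x) = bar a • ψ x) ∧
  (∀ i : Fin r, ψ (uk i) = ukinv i) ∧
  (∀ i : Fin r, ψ (ue i) = ue i) ∧
  (∀ i : Fin r, ψ (uf i) = uf i)


/-!
`ψ_ȷ` is built on the free algebra as the `bar`-semilinear lift of `e ↦ e`, `f ↦ f`, `k ↦ k⁻¹`,
`k⁻¹ ↦ k`. It descends to `U^ȷ` because each defining relation is sent to a relation again:
the relations are invariant under `p ↦ p⁻¹`, `q ↦ q⁻¹`, `k_i ↔ k_i⁻¹` (in the `ıSerre` relations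
the term `pq k + p⁻¹q⁻¹ k⁻¹` is symmetric, and `(q - q⁻¹)⁻¹ (k - k⁻¹)` changes sign twice).
A semilinear ring endomorphism of a quotient of a free algebra is determined by its values on the
generators; this gives uniqueness, and, since `bar` is an involution (it is determined by its values
at `p` and `q`), it shows that `ψ_ȷ ∘ ψ_ȷ` is the identity.
-/

theorem FractionRing.mvPolynomial_ringHom_ext {σ B : Type*} [Semiring B]
    {f g : FractionRing (MvPolynomial σ ℚ) →+* B}
    (h : ∀ i, f (algebraMap _ _ (MvPolynomial.X i : MvPolynomial σ ℚ)) =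
      g (algebraMap _ _ (MvPolynomial.X i : MvPolynomial σ ℚ))) :
    f = g :=
  IsLocalization.ringHom_ext (nonZeroDivisors _) <| MvPolynomial.ringHom_ext
    (fun a => RingHom.congr_fun (Subsingleton.elim
      ((f.comp (algebraMap _ _)).comp MvPolynomial.C) ((g.comp (algebraMap _ _)).comp _)) a) h

theorem FreeAlgebra.ringHom_ext {R X B : Type*} [CommSemiring R] [Semiring B]
    {f g : FreeAlgebra R X →+* B}
    (halg : ∀ a, f (algebraMap R _ a) = g (algebraMap R _ a))
    (hι : ∀ x, f (ι R x) = g (ι R x)) :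
    f = g := by
  ext y
  induction y using FreeAlgebra.induction with
  | grade0 a => exact halg a
  | grade1 x => exact hι x
  | mul a b ha hb => rw [map_mul, map_mul, ha, hb]
  | add a b ha hb => rw [map_add, map_add, ha, hb]

theorem RingQuot.freeAlgebra_ringHom_ext {R X B : Type*} [CommSemiring R] [Semiring B]
    [Algebra R B] {rel : FreeAlgebra R X → FreeAlgebra R X → Prop} {σ : R →+* R}
    {f g : RingQuot rel →+* B} (hf : ∀ (a : R) x, f (a • x) = σ a • f x)
    (hg : ∀ (a : R) x, g (a • x) = σ a • g x)
    (hι : ∀ x, f (mkAlgHom R rel (FreeAlgebra.ι R x)) =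
      g (mkAlgHom R rel (FreeAlgebra.ι R x))) :
    f = g := by
  refine RingQuot.ringQuot_ext f g (FreeAlgebra.ringHom_ext (fun a => ?_) fun x => ?_) <;>
    simp only [RingHom.comp_apply, ← RingQuot.mkAlgHom_coe R, RingHom.coe_coe]
  · rw [AlgHom.commutes, Algebra.algebraMap_eq_smul_one, hf, hg, map_one, map_one]
  · exact hι x

def FreeAlgebra.semilinearLift {R X B : Type*} [CommSemiring R] [Semiring B] [Algebra R B]
    (σ : R →+* R) (φ : X → B) : FreeAlgebra R X →+* B :=
  letI := Algebra.compHom B σ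
  (FreeAlgebra.lift R φ).toRingHom

section semilinearLift

variable {R X B : Type*} [CommSemiring R] [Semiring B] [Algebra R B] (σ : R →+* R) (φ : X → B)

theorem FreeAlgebra.semilinearLift_ι (x : X) : semilinearLift σ φ (ι R x) = φ x := by
  let := Algebra.compHom B σ
  exact FreeAlgebra.lift_ι_apply φ x

theorem FreeAlgebra.semilinearLift_smul (a : R) (y : FreeAlgebra R X) :
    semilinearLift σ φ (a • y) = σ a • semilinearLift σ φ y := by
  let := Algebra.compHom B σ
  exact map_smul (FreeAlgebra.lift R φ) a y

end semilinearLift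

theorem qq_ne_zero : qq ≠ 0 :=
  (map_ne_zero_iff _ (IsFractionRing.injective (MvPolynomial (Fin 2) ℚ) K2)).2
    (MvPolynomial.X_ne_zero 1)

theorem bar_bar {bar : K2 →+* K2} (hp : bar pp = pp⁻¹) (hq : bar qq = qq⁻¹) (a : K2) :
    bar (bar a) = a := by
  have : bar.comp bar = RingHom.id K2 := by
    refine FractionRing.mvPolynomial_ringHom_ext fun i => ?_
    fin_cases i
    · show bar (bar pp) = pp
      rw [hp, map_inv₀, hp, inv_inv]
    · show bar (bar qq) = qq
      rw [hq, map_inv₀, hq, inv_inv]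
  exact RingHom.congr_fun this a

theorem mul_eq_smul_mul_of_mul_eq_smul_mul {R A : Type*} [CommSemiring R] [Semiring A]
    [Algebra R A] {u v x : A} {a : R} (huv : u * v = 1) (hvu : v * u = 1)
    (h : u * x = a • (x * u)) : x * v = a • (v * x) :=
  calc x * v = v * (u * x) * v := by rw [← mul_assoc, hvu, one_mul]
    _ = a • (v * x * (u * v)) := by rw [h, mul_smul_comm, smul_mul_assoc]; noncomm_ring
    _ = a • (v * x) := by rw [huv, mul_one]

namespace Uj

variable {r : ℕ}

@[simp] theorem mk_ge (i : Fin r) : RingQuot.mkAlgHom K2 (UjRel r) (ge i) = ue i := rfl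
@[simp] theorem mk_gf (i : Fin r) : RingQuot.mkAlgHom K2 (UjRel r) (gf i) = uf i := rfl
@[simp] theorem mk_gk (i : Fin r) : RingQuot.mkAlgHom K2 (UjRel r) (gk i) = uk i := rfl
@[simp] theorem mk_gkinv (i : Fin r) : RingQuot.mkAlgHom K2 (UjRel r) (gkinv i) = ukinv i := rfl

theorem uk_mul_ukinv (i : Fin r) : uk i * ukinv i = 1 := by
  simpa using RingQuot.mkAlgHom_rel K2 (UjRel.kkinv i)

theorem ukinv_mul_uk (i : Fin r) : ukinv i * uk i = 1 := by
  simpa using RingQuot.mkAlgHom_rel K2 (UjRel.kinvk i)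

theorem uk_commute (i j : Fin r) : Commute (uk i) (uk j) := by
  show uk i * uk j = uk j * uk i
  simpa using RingQuot.mkAlgHom_rel K2 (UjRel.kk i j)

def ukUnit (i : Fin r) : (Uj r)ˣ := ⟨uk i, ukinv i, uk_mul_ukinv i, ukinv_mul_uk i⟩

theorem ukinv_commute (i j : Fin r) : Commute (ukinv i) (ukinv j) :=
  ((uk_commute i j).units_inv_left (u := ukUnit i)).units_inv_right (u := ukUnit j)

theorem uk_mul_ue (i j : Fin r) : uk i * ue j = qq ^ cij i j • (ue j * uk i) := by
  simpa using RingQuot.mkAlgHom_rel K2 (UjRel.ke i j)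

theorem uk_mul_uf (i j : Fin r) : uk i * uf j = qq ^ (-cij i j) • (uf j * uk i) := by
  simpa using RingQuot.mkAlgHom_rel K2 (UjRel.kf i j)

theorem ukinv_mul_of_uk_mul {i : Fin r} {x : Uj r} {c : ℤ}
    (h : uk i * x = qq ^ c • (x * uk i)) :
    ukinv i * x = qq⁻¹ ^ c • (x * ukinv i) := by
  rw [mul_eq_smul_mul_of_mul_eq_smul_mul (uk_mul_ukinv i) (ukinv_mul_uk i) h, smul_smul,
    ← mul_zpow, inv_mul_cancel₀ qq_ne_zero, one_zpow, one_smul]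

def psiGen : UjGen r → Uj r
  | .e i => ue i
  | .f i => uf i
  | .k i => ukinv i
  | .kinv i => uk i

def psiFree (bar : K2 →+* K2) : FUj r →+* Uj r :=
  FreeAlgebra.semilinearLift bar psiGen

section psiFree

variable (bar : K2 →+* K2)

@[simp] theorem psiFree_ge (i : Fin r) : psiFree bar (ge i) = ue i :=
  FreeAlgebra.semilinearLift_ι bar psiGen _
@[simp] theorem psiFree_gf (i : Fin r) : psiFree bar (gf i) = uf i :=
  FreeAlgebra.semilinearLift_ι bar psiGen _
@[simp] theorem psiFree_gk (i : Fin r) : psiFree bar (gk i) = ukinv i :=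
  FreeAlgebra.semilinearLift_ι bar psiGen _
@[simp] theorem psiFree_gkinv (i : Fin r) : psiFree bar (gkinv i) = uk i :=
  FreeAlgebra.semilinearLift_ι bar psiGen _

@[simp] theorem psiFree_smul (a : K2) (x : FUj r) :
    psiFree bar (a • x) = bar a • psiFree bar x :=
  FreeAlgebra.semilinearLift_smul bar psiGen a x

end psiFree

theorem psiFree_eq_of_rel {bar : K2 →+* K2} (hp : bar pp = pp⁻¹) (hq : bar qq = qq⁻¹)
    {x y : FUj r} (h : UjRel r x y) : psiFree bar x = psiFree bar y := by
  cases h with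
  | kkinv i => simpa using ukinv_mul_uk i
  | kinvk i => simpa using uk_mul_ukinv i
  | kk i j => simpa using (ukinv_commute i j).eq
  | ke i j => simpa [hq] using ukinv_mul_of_uk_mul (uk_mul_ue i j)
  | kf i j => simpa [hq] using ukinv_mul_of_uk_mul (uk_mul_uf i j)
  | ef i j h =>
    have hrel : ue i * uf j - uf j * ue i =
        if i = j then (qq - qq⁻¹)⁻¹ • (uk i - ukinv i) else 0 := by
      simpa [apply_ite] using RingQuot.mkAlgHom_rel K2 (UjRel.ef i j h)
    simp only [map_sub, map_mul, psiFree_ge, psiFree_gf, apply_ite (psiFree bar), map_zero,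
      psiFree_smul, psiFree_gk, psiFree_gkinv, map_inv₀, hq, inv_inv]
    rw [hrel, ← neg_sub qq, inv_neg, ← neg_sub (uk i), neg_smul_neg]
  | ee i j h => simpa using RingQuot.mkAlgHom_rel K2 (UjRel.ee i j h)
  | ff i j h => simpa using RingQuot.mkAlgHom_rel K2 (UjRel.ff i j h)
  | serre_e i j h =>
    simpa [hq, add_comm qq⁻¹] using RingQuot.mkAlgHom_rel K2 (UjRel.serre_e i j h)
  | serre_f i j h =>
    simpa [hq, add_comm qq⁻¹] using RingQuot.mkAlgHom_rel K2 (UjRel.serre_f i j h)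
  | eef i h =>
    simpa [hp, hq, add_comm qq⁻¹, add_comm ((pp⁻¹ * qq⁻¹) • ukinv i)] using
      RingQuot.mkAlgHom_rel K2 (UjRel.eef i h)
  | ffe i h =>
    simpa [hp, hq, add_comm qq⁻¹, add_comm ((pp⁻¹ * qq⁻¹) • ukinv i)] using
      RingQuot.mkAlgHom_rel K2 (UjRel.ffe i h)

def psij {bar : K2 →+* K2} (hp : bar pp = pp⁻¹) (hq : bar qq = qq⁻¹) : Uj r →+* Uj r :=
  RingQuot.lift ⟨psiFree bar, fun _ _ => psiFree_eq_of_rel hp hq⟩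

theorem psij_mk {bar : K2 →+* K2} (hp : bar pp = pp⁻¹) (hq : bar qq = qq⁻¹) (x : FUj r) :
    psij hp hq (RingQuot.mkAlgHom K2 (UjRel r) x) = psiFree bar x := by
  rw [← AlgHom.coe_toRingHom, RingQuot.mkAlgHom_coe]
  exact RingQuot.lift_mkRingHom_apply _ _ x

theorem psijCond_psij {bar : K2 →+* K2} (hp : bar pp = pp⁻¹) (hq : bar qq = qq⁻¹) :
    psijCond r bar (psij hp hq) := by
  refine ⟨fun a x => ?_, fun i => (psij_mk hp hq (gk i)).trans (psiFree_gk bar i),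
    fun i => (psij_mk hp hq (ge i)).trans (psiFree_ge bar i),
    fun i => (psij_mk hp hq (gf i)).trans (psiFree_gf bar i)⟩
  obtain ⟨y, rfl⟩ := RingQuot.mkAlgHom_surjective K2 (UjRel r) x
  rw [← map_smul, psij_mk, psij_mk, psiFree_smul]

end Uj

open Uj

namespace psijCond

variable {r : ℕ} {bar : K2 →+* K2} {ψ : Uj r →+* Uj r}

theorem map_ukinv (h : psijCond r bar ψ) (i : Fin r) : ψ (ukinv i) = uk i :=
  left_inv_eq_right_inv (by rw [← map_one ψ, ← ukinv_mul_uk i, map_mul, h.2.1])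
    (ukinv_mul_uk i)

theorem map_mk_ι (h : psijCond r bar ψ) (g : UjGen r) :
    ψ (RingQuot.mkAlgHom K2 (UjRel r) (FreeAlgebra.ι K2 g)) = psiGen g := by
  cases g with
  | e i => exact h.2.2.1 i
  | f i => exact h.2.2.2 i
  | k i => exact h.2.1 i
  | kinv i => exact h.map_ukinv i

theorem ext {ψ' : Uj r →+* Uj r} (h : psijCond r bar ψ) (h' : psijCond r bar ψ') : ψ = ψ' :=
  RingQuot.freeAlgebra_ringHom_ext h.1 h'.1 fun g => by rw [h.map_mk_ι, h'.map_mk_ι]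

theorem comp_self (hp : bar pp = pp⁻¹) (hq : bar qq = qq⁻¹) (h : psijCond r bar ψ) :
    ψ.comp ψ = RingHom.id (Uj r) := by
  refine RingQuot.freeAlgebra_ringHom_ext (σ := RingHom.id K2) (fun a x => ?_) (fun _ _ => rfl)
    fun g => ?_
  · simp only [RingHom.comp_apply, h.1, bar_bar hp hq, RingHom.id_apply]
  · rw [RingHom.comp_apply, h.map_mk_ι, RingHom.id_apply]
    cases g with
    | e i => exact h.2.2.1 i
    | f i => exact h.2.2.2 i
    | k i => exact h.map_ukinv i
    | kinv i => exact h.2.1 i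

end psijCond

theorem psi_j_exists_unique_general (r : ℕ) (bar : K2 →+* K2)
    (hp : bar pp = pp⁻¹) (hq : bar qq = qq⁻¹) :
    (∃! ψ : Uj r →+* Uj r, psijCond r bar ψ) ∧
    (∀ ψ : Uj r →+* Uj r, psijCond r bar ψ → ∀ x : Uj r, ψ (ψ x) = x) :=
  ⟨⟨psij hp hq, psijCond_psij hp hq, fun _ h => h.ext (psijCond_psij hp hq)⟩,
    fun _ h => RingHom.congr_fun (h.comp_self hp hq)⟩

/-- there is a unique `ℚ`-algebra homomorphism `ψ_ȷ : U^ȷ → U^ȷ` which is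
`bar`-semilinear, fixes the `e_i, f_i` and sends `k_i ↦ k_i⁻¹`; moreover it is an involution. -/
theorem psi_j_exists_unique (r : ℕ) (hr : 1 ≤ r) (bar : K2 →+* K2)
    (hp : bar pp = pp⁻¹) (hq : bar qq = qq⁻¹) :
    (∃! ψ : Uj r →+* Uj r, psijCond r bar ψ) ∧
    (∀ ψ : Uj r →+* Uj r, psijCond r bar ψ → ∀ x : Uj r, ψ (ψ x) = x) :=
  psi_j_exists_unique_general r bar hp hq
end
end
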